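/- Let G be a generalized matrix algebra (as in the context) and let ψ : G × G × G → G be a 3-Lie derivation with ψ(e,e,e) ∈ Z(G). Then: (i) for all x, y, z ∈ A ∪ B one has e*ψ(x,y,z)*f = 0 and f*ψ(x,y,z)*e = 0; (ii) for all x, y ∈ A ∪ B one has ψ(x,e,e) ∈ Z(G) and ψ(x,y,e) ∈ Z(G); (iii) for every x ∈ B and y, z ∈ A ∪ B the elements e*ψ(x,y,z)*e, e*ψ(y,x,z)*e and e*ψ(y,z,x)*e lie in Z(A), and for every x ∈ A and y, z ∈ A ∪ B the elements f*ψ(x,y,z)*f, f*ψ(y,x,z)*f and f*ψ(y,z,x)*f lie in Z(B). -/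
import Mathlib


/-- Commutator `[x,y] = x*y - y*x`. -/
def brk {G : Type*} [Ring G] (x y : G) : G := x * y - y * x

/-- `corner p q x` says `x` lies in the Peirce corner `p * G * q`. -/
def corner {G : Type*} [Ring G] (p q x : G) : Prop := p * x * q = x

/-- `central z` says `z` lies in the center of `G`. -/
def central {G : Type*} [Ring G] (z : G) : Prop := ∀ g : G, z * g = g * z

/-- Membership in the center of the corner algebra `p*G*p`. -/
def cornerCentral {G : Type*} [Ring G] (p a : G) : Prop :=
  corner p p a ∧ ∀ a', corner p p a' → a * a' = a' * a

/-- Membership in `A ∪ B` where `A = eGe`, `B = fGf`, `f = 1 - e`. -/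
def inAB {G : Type*} [Ring G] (e x : G) : Prop :=
  corner e e x ∨ corner (1 - e) (1 - e) x

/-- A Lie biderivation: `R`-bilinear and a Lie derivation in each argument. -/
def IsLieBider (R : Type*) [CommRing R] {A : Type*} [Ring A] [Algebra R A]
    (φ : A → A → A) : Prop :=
  (∀ y : A, IsLinearMap R fun x => φ x y) ∧
  (∀ x : A, IsLinearMap R fun y => φ x y) ∧
  (∀ y a b : A, φ (brk a b) y = brk (φ a y) b + brk a (φ b y)) ∧
  (∀ x a b : A, φ x (brk a b) = brk (φ x a) b + brk a (φ x b))

/-- A 3-Lie derivation: `R`-linear in each argument and a Lie derivation in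
each argument when the other two are fixed. -/
def IsLieDer3 (R : Type*) [CommRing R] {G : Type*} [Ring G] [Algebra R G]
    (ψ : G → G → G → G) : Prop :=
  (∀ y z : G, IsLinearMap R fun x => ψ x y z) ∧
  (∀ x z : G, IsLinearMap R fun y => ψ x y z) ∧
  (∀ x y : G, IsLinearMap R fun z => ψ x y z) ∧
  (∀ y z a b : G, ψ (brk a b) y z = brk (ψ a y z) b + brk a (ψ b y z)) ∧
  (∀ x z a b : G, ψ x (brk a b) z = brk (ψ x a z) b + brk a (ψ x b z)) ∧
  (∀ x y a b : G, ψ x y (brk a b) = brk (ψ x y a) b + brk a (ψ x y b))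

/-- Iterated bracket `[x 0, [x 1, …, [x (n-1), x0]…]]`. -/
def iterBr {G : Type*} [Ring G] : {n : ℕ} → (Fin n → G) → G → G
  | 0, _, x0 => x0
  | _ + 1, x, x0 => brk (x 0) (iterBr (Fin.tail x) x0)

/-- An `n`-Lie derivation: `R`-linear in each argument and a Lie derivation in
each argument when the other arguments are fixed. -/
def IsNLieDer (R : Type*) [CommRing R] {G : Type*} [Ring G] [Algebra R G]
    {n : ℕ} (φ : (Fin n → G) → G) : Prop :=
  ∀ (i : Fin n) (x : Fin n → G),
    (IsLinearMap R fun t => φ (Function.update x i t)) ∧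
    ∀ a b : G, φ (Function.update x i (brk a b)) =
      brk (φ (Function.update x i a)) b + brk a (φ (Function.update x i b))

/-- `M = eG(1-e)` is faithful as a left `eGe`-module and right `(1-e)G(1-e)`-module. -/
def Faithful {G : Type*} [Ring G] (e : G) : Prop :=
  (∀ a, corner e e a → (∀ m, corner e (1 - e) m → a * m = 0) → a = 0) ∧
  (∀ b, corner (1 - e) (1 - e) b → (∀ m, corner e (1 - e) m → m * b = 0) → b = 0)

/-- (H1): `Z(A) = e Z(G) e` and `Z(B) = f Z(G) f`. -/
def H1P {G : Type*} [Ring G] (e : G) : Prop :=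
  (∀ a, cornerCentral e a → ∃ w, central w ∧ a = e * w * e) ∧
  (∀ b, cornerCentral (1 - e) b → ∃ w, central w ∧ b = (1 - e) * w * (1 - e))

/-- The corner algebra `pGp` contains no nonzero central ideal. -/
def NoCentralIdeal {G : Type*} [Ring G] (p : G) : Prop :=
  ¬ ∃ c : G, c ≠ 0 ∧ cornerCentral p c ∧ ∀ a, corner p p a → cornerCentral p (a * c)

/-- (H2): `A` or `B` contains no nonzero central ideal. -/
def H2P {G : Type*} [Ring G] (e : G) : Prop :=
  NoCentralIdeal e ∨ NoCentralIdeal (1 - e)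

/-- (H3): central elements annihilating a nonzero element vanish. -/
def H3P (G : Type*) [Ring G] : Prop :=
  ∀ α a : G, central α → α * a = 0 → a ≠ 0 → α = 0

/-- (H4): if `MN = 0 = NM` then `A` or `B` is noncommutative. -/
def H4P {G : Type*} [Ring G] (e : G) : Prop :=
  (∀ m n, corner e (1 - e) m → corner (1 - e) e n → m * n = 0 ∧ n * m = 0) →
    (∃ a1 a2, corner e e a1 ∧ corner e e a2 ∧ a1 * a2 ≠ a2 * a1) ∨
    (∃ b1 b2, corner (1 - e) (1 - e) b1 ∧ corner (1 - e) (1 - e) b2 ∧ b1 * b2 ≠ b2 * b1)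

/-- (H3'): for `n ∈ N`, `Mn = 0 = nM` implies `n = 0`. -/
def H3prime {G : Type*} [Ring G] (e : G) : Prop :=
  ∀ n, corner (1 - e) e n → (∀ m, corner e (1 - e) m → m * n = 0 ∧ n * m = 0) → n = 0

/-- (H4'): for `m ∈ M`, `Nm = 0 = mN` implies `m = 0`. -/
def H4prime {G : Type*} [Ring G] (e : G) : Prop :=
  ∀ m, corner e (1 - e) m → (∀ n, corner (1 - e) e n → n * m = 0 ∧ m * n = 0) → m = 0

/-- (H5): every special pair of bimodule homomorphisms has standard form. -/
def H5P (R : Type*) [CommRing R] {G : Type*} [Ring G] [Algebra R G] (e : G) : Prop :=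
  ∀ F E : G → G,
    (∀ m, corner e (1 - e) m → corner e (1 - e) (F m)) →
    (∀ n, corner (1 - e) e n → corner (1 - e) e (E n)) →
    (∀ m m', corner e (1 - e) m → corner e (1 - e) m' → F (m + m') = F m + F m') →
    (∀ (r : R) (m), corner e (1 - e) m → F (r • m) = r • F m) →
    (∀ n n', corner (1 - e) e n → corner (1 - e) e n' → E (n + n') = E n + E n') →
    (∀ (r : R) (n), corner (1 - e) e n → E (r • n) = r • E n) →
    (∀ a m b, corner e e a → corner e (1 - e) m → corner (1 - e) (1 - e) b →
      F (a * m * b) = a * F m * b) →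
    (∀ b n a, corner (1 - e) (1 - e) b → corner (1 - e) e n → corner e e a →
      E (b * n * a) = b * E n * a) →
    (∀ m n, corner e (1 - e) m → corner (1 - e) e n →
      F m * n + m * E n = 0 ∧ n * F m + E n * m = 0) →
    ∃ ω0 ω1 : G, cornerCentral e ω0 ∧ cornerCentral (1 - e) ω1 ∧
      (∀ m, corner e (1 - e) m → F m = ω0 * m + m * ω1) ∧
      (∀ n, corner (1 - e) e n → E n = -(n * ω0) - ω1 * n)

/-- (H5'): every `R`-linear derivation of `G` is inner. -/
def DerInner (R : Type*) [CommRing R] (G : Type*) [Ring G] [Algebra R G] : Prop :=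
  ∀ d : G → G, IsLinearMap R d → (∀ x y : G, d (x * y) = d x * y + x * d y) →
    ∃ g : G, ∀ x : G, d x = g * x - x * g


section GMAux
variable {G : Type*} [Ring G] {e : G}

lemma hff (he : e*e = e) : (1-e)*(1-e) = 1-e := by noncomm_ring [he]
lemma ef (he : e*e = e) : e*(1-e) = 0 := by noncomm_ring [he]
lemma fe (he : e*e = e) : (1-e)*e = 0 := by noncomm_ring [he]

lemma cPQ {p q : G} (hp : p*p = p) (hq : q*q = q) {m : G} (hm : p*m*q = m) :
    p*m = m ∧ m*q = m := by
  constructor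
  · conv_lhs => rw [← hm]
    rw [← mul_assoc, ← mul_assoc, hp, hm]
  · conv_lhs => rw [← hm]
    rw [mul_assoc, hq, hm]

lemma annL {p q r : G} (hpr : r*p = 0) {m : G} (hm : p*m*q = m) : r*m = 0 := by
  conv_lhs => rw [← hm]
  rw [← mul_assoc, ← mul_assoc, hpr, zero_mul, zero_mul]

lemma annR {p q r : G} (hqr : q*r = 0) {m : G} (hm : p*m*q = m) : m*r = 0 := by
  conv_lhs => rw [← hm]
  rw [mul_assoc, hqr, mul_zero]

lemma corner_pgq {p q : G} (hp : p*p = p) (hq : q*q = q) (g : G) :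
    p*(p*g*q)*q = p*g*q := by
  rw [← mul_assoc p (p*g) q, ← mul_assoc p p g, hp, mul_assoc (p*g) q q, hq]

lemma corner_mul {p x y : G} (hp : p*p = p) (hx : p*x*p = x) (hy : p*y*p = y) :
    p*(x*y)*p = x*y := by
  rw [← mul_assoc, (cPQ hp hp hx).1, mul_assoc, (cPQ hp hp hy).2]

lemma corner_sub {p q x y : G} (hx : p*x*q = x) (hy : p*y*q = y) :
    p*(x-y)*q = x - y := by
  rw [mul_sub, sub_mul, hx, hy]

lemma mulBrk (p w q r : G) : p*(brk q r)*w = p*(q*r)*w - p*(r*q)*w := by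
  simp only [brk, mul_sub, sub_mul]

lemma brkPQ {p q : G} (hp : p*p = p) (hpq : p*q = 0) (s : G) :
    p*(brk p s)*q = p*s*q := by
  simp only [brk, mul_sub, sub_mul]
  rw [← mul_assoc p p s, hp, mul_assoc p (s*p) q, mul_assoc s p q, hpq, mul_zero,
    mul_zero, sub_zero]

lemma brkQP {p q : G} (hp : p*p = p) (hqp : q*p = 0) (s : G) :
    q*(brk p s)*p = -(q*s*p) := by
  simp only [brk, mul_sub, sub_mul]
  rw [← mul_assoc q p s, hqp, zero_mul, zero_mul, ← mul_assoc q s p,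
    mul_assoc (q*s) p p, hp, zero_sub]

lemma shape1 {p q m : G} (hp : p*p = p) (hq : q*q = q) (hm : p*m*q = m) (t : G) :
    p*(t*m)*q = (p*t*p)*m := by
  obtain ⟨h1, h2⟩ := cPQ hp hq hm
  rw [← mul_assoc p t m, mul_assoc (p*t) m q, h2]
  conv_lhs => rw [← h1]
  rw [← mul_assoc (p*t) p m]

lemma shape2 {p q m : G} (hp : p*p = p) (hq : q*q = q) (hm : p*m*q = m) (t : G) :
    p*(m*t)*q = m*(q*t*q) := by
  obtain ⟨h1, h2⟩ := cPQ hp hq hm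
  rw [← mul_assoc p m t, h1, mul_assoc m t q]
  conv_lhs => rw [← h2]
  rw [mul_assoc m q (t*q), ← mul_assoc q t q]

lemma orthoZ {p q : G} (hpq : p*q = 0) (u v w x : G) : (u*v*p)*(q*w*x) = 0 := by
  rw [mul_assoc (u*v) p ((q*w)*x), ← mul_assoc p (q*w) x, ← mul_assoc p q w, hpq,
    zero_mul, zero_mul, mul_zero]

lemma cancel_add {E D : G} (h : E = D + E) : D = 0 := by
  have h2 : D + E = 0 + E := by rw [← h, zero_add]
  exact add_right_cancel h2

lemma etf_zero {q : G} (he : e*e = e) (h1 : e*q = q*e) : e*q*(1-e) = 0 := by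
  have hete : e*q*e = e*q := by rw [h1, mul_assoc, he]
  rw [mul_sub, mul_one, hete, sub_self]

lemma fte_zero {q : G} (he : e*e = e) (h1 : e*q = q*e) : (1-e)*q*e = 0 := by
  have hete : e*q*e = e*q := by rw [h1, mul_assoc, he]
  rw [sub_mul, sub_mul, one_mul, hete, h1, sub_self]

lemma brk_em (he : e*e = e) {m : G} (hm : e*m*(1-e) = m) : brk e m = m := by
  show e*m - m*e = m
  rw [(cPQ he (hff he) hm).1, annR (fe he) hm, sub_zero]

lemma brk_en (he : e*e = e) {n : G} (hn : (1-e)*n*e = n) : brk e n = -n := by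
  show e*n - n*e = -n
  rw [annL (ef he) hn, (cPQ (hff he) he hn).2, zero_sub]

lemma brk_disj {p q a x : G} (hpq : p*q = 0) (hqp : q*p = 0)
    (ha : p*a*p = a) (hx : q*x*q = x) : brk a x = 0 := by
  show a*x - x*a = 0
  rw [annR (annL hpq hx) ha, annR (annL hqp ha) hx, sub_zero]

lemma keyM {m t W : G} (he : e*e = e) (hm : e*m*(1-e) = m)
    (h : W = brk t m + brk e W) : (e*t*e)*m = m*((1-e)*t*(1-e)) := by
  have hfe := hff he
  have h' : e*W*(1-e) = e*(brk t m + brk e W)*(1-e) := by rw [← h]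
  rw [mul_add, add_mul, brkPQ he (ef he) W, mulBrk, shape1 he hfe hm t,
    shape2 he hfe hm t] at h'
  exact sub_eq_zero.mp (cancel_add h')

lemma keyN {n t W : G} (he : e*e = e) (hn : (1-e)*n*e = n)
    (h : -W = brk t n + brk e W) : ((1-e)*t*(1-e))*n = n*(e*t*e) := by
  have hfe := hff he
  have h' : (1-e)*(-W)*e = (1-e)*(brk t n + brk e W)*e := by rw [← h]
  rw [mul_neg, neg_mul, mul_add, add_mul, brkQP he (fe he) W, mulBrk,
    shape1 hfe he hn t, shape2 hfe he hn t] at h'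
  exact sub_eq_zero.mp (cancel_add h')

lemma cornerBrkA {p a t : G} (hp : p*p = p) (ha : p*a*p = a) :
    p*(brk a t)*p = a*(p*t*p) - (p*t*p)*a := by
  obtain ⟨ha1, ha2⟩ := cPQ hp hp ha
  have e1 : p*(a*t)*p = a*(p*t*p) := by
    rw [← mul_assoc p a t, ha1, mul_assoc a t p]
    conv_lhs => rw [← ha2]
    rw [mul_assoc a p (t*p), ← mul_assoc p t p]
  have e2 : p*(t*a)*p = (p*t*p)*a := by
    rw [mul_assoc p (t*a) p, mul_assoc t a p, ha2, ← mul_assoc p t a]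
    conv_lhs => rw [← ha1]
    rw [← mul_assoc (p*t) p a]
  show p*(a*t - t*a)*p = _
  rw [mul_sub, sub_mul, e1, e2]

lemma zero_pBrk {p x W : G} (hpx : p*x = 0) (hxp : x*p = 0) :
    p*(brk W x)*p = 0 := by
  show p*(W*x - x*W)*p = 0
  rw [mul_sub, sub_mul, mul_assoc p (W*x) p, mul_assoc W x p, hxp, mul_zero,
    mul_zero, ← mul_assoc p x W, hpx, zero_mul, zero_mul, sub_zero]

lemma sliceP {p a x W t : G} (hp : p*p = p) (ha : p*a*p = a)
    (hpx : p*x = 0) (hxp : x*p = 0)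
    (h : brk W x + brk a t = 0) : (p*t*p)*a = a*(p*t*p) := by
  have h2 : brk a t = -(brk W x) := eq_neg_of_add_eq_zero_right h
  have h4 : a*(p*t*p) - (p*t*p)*a = 0 := by
    calc a*(p*t*p) - (p*t*p)*a = p*(brk a t)*p := (cornerBrkA hp ha).symm
      _ = p*(-(brk W x))*p := by rw [h2]
      _ = -(p*(brk W x)*p) := by rw [mul_neg, neg_mul]
      _ = 0 := by rw [zero_pBrk hpx hxp, neg_zero]
  exact (sub_eq_zero.mp h4).symm

lemma central_of (he : e*e = e) (hf : Faithful e) {t : G}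
    (h1 : e*t = t*e)
    (hM : ∀ m : G, e*m*(1-e) = m → (e*t*e)*m = m*((1-e)*t*(1-e)))
    (hN : ∀ n : G, (1-e)*n*e = n → ((1-e)*t*(1-e))*n = n*(e*t*e)) :
    central t := by
  have hfe := hff he
  have etf0 := etf_zero he h1
  have fte0 := fte_zero he h1
  have hZA : ∀ a, e*a*e = a → (e*t*e)*a = a*(e*t*e) := by
    intro a ha
    refine sub_eq_zero.mp (hf.1 _ ?_ ?_)
    · exact corner_sub (corner_mul he (corner_pgq he he t) ha)
        (corner_mul he ha (corner_pgq he he t))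
    · intro m hm
      have hm' : e*m*(1-e) = m := hm
      have hAM : e*(a*m)*(1-e) = a*m := by
        rw [← mul_assoc e a m, (cPQ he he ha).1, mul_assoc a m (1-e),
          (cPQ he hfe hm').2]
      show ((e*t*e)*a - a*(e*t*e))*m = 0
      rw [sub_mul, mul_assoc (e*t*e) a m, hM _ hAM, mul_assoc a (e*t*e) m,
        hM m hm', ← mul_assoc a m ((1-e)*t*(1-e)), sub_self]
  have hZB : ∀ b, (1-e)*b*(1-e) = b → ((1-e)*t*(1-e))*b = b*((1-e)*t*(1-e)) := by
    intro b hb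
    refine sub_eq_zero.mp (hf.2 _ ?_ ?_)
    · exact corner_sub (corner_mul hfe (corner_pgq hfe hfe t) hb)
        (corner_mul hfe hb (corner_pgq hfe hfe t))
    · intro m hm
      have hm' : e*m*(1-e) = m := hm
      have hMB : e*(m*b)*(1-e) = m*b := by
        rw [← mul_assoc e m b, (cPQ he hfe hm').1, mul_assoc m b (1-e),
          (cPQ hfe hfe hb).2]
      show m*((1-e)*t*(1-e)*b - b*((1-e)*t*(1-e))) = 0
      rw [mul_sub, ← mul_assoc m ((1-e)*t*(1-e)) b, ← hM m hm',
        mul_assoc (e*t*e) m b, ← mul_assoc m b ((1-e)*t*(1-e)), ← hM _ hMB,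
        sub_self]
  intro g
  have ht : t = e*t*e + e*t*(1-e) + ((1-e)*t*e + (1-e)*t*(1-e)) := by noncomm_ring
  have ht2 : t = e*t*e + (1-e)*t*(1-e) := by
    conv_lhs => rw [ht]
    rw [etf0, fte0, add_zero, zero_add]
  have hg : g = e*g*e + e*g*(1-e) + ((1-e)*g*e + (1-e)*g*(1-e)) := by noncomm_ring
  have c1 : (e*t*e)*(e*g*e) = (e*g*e)*(e*t*e) := hZA _ (corner_pgq he he g)
  have c2 : (e*t*e)*(e*g*(1-e)) = (e*g*(1-e))*((1-e)*t*(1-e)) :=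
    hM _ (corner_pgq he hfe g)
  have c3 : ((1-e)*t*(1-e))*((1-e)*g*e) = ((1-e)*g*e)*(e*t*e) :=
    hN _ (corner_pgq hfe he g)
  have c4 : ((1-e)*t*(1-e))*((1-e)*g*(1-e)) = ((1-e)*g*(1-e))*((1-e)*t*(1-e)) :=
    hZB _ (corner_pgq hfe hfe g)
  show t * g = g * t
  conv_lhs => rw [ht2, hg]
  conv_rhs => rw [ht2, hg]
  simp only [mul_add, add_mul]
  rw [orthoZ (ef he) e t g e, orthoZ (ef he) e t g (1-e),
    orthoZ (fe he) (1-e) t g e, orthoZ (fe he) (1-e) t g (1-e),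
    orthoZ (ef he) e g t (1-e), orthoZ (fe he) e g t e,
    orthoZ (ef he) (1-e) g t (1-e), orthoZ (fe he) (1-e) g t e,
    c1, c2, c3, c4]
  abel

end GMAux

theorem threeLieDer_central_on_AB {R : Type*} [CommRing R]
    (htf : ∀ r : R, r + r = 0 → r = 0)
    {G : Type*} [Ring G] [Algebra R G] (e : G) (he : e * e = e)
    (he0 : e ≠ 0) (he1 : e ≠ 1) (hf : Faithful e)
    (ψ : G → G → G → G) (hψ : IsLieDer3 R ψ) (hc : central (ψ e e e)) :
    (∀ x y z : G, inAB e x → inAB e y → inAB e z →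
      e * ψ x y z * (1 - e) = 0 ∧ (1 - e) * ψ x y z * e = 0) ∧
    (∀ x : G, inAB e x → central (ψ x e e)) ∧
    (∀ x y : G, inAB e x → inAB e y → central (ψ x y e)) ∧
    (∀ x y z : G, corner (1 - e) (1 - e) x → inAB e y → inAB e z →
      cornerCentral e (e * ψ x y z * e) ∧
      cornerCentral e (e * ψ y x z * e) ∧
      cornerCentral e (e * ψ y z x * e)) ∧
    (∀ x y z : G, corner e e x → inAB e y → inAB e z →
      cornerCentral (1 - e) ((1 - e) * ψ x y z * (1 - e)) ∧
      cornerCentral (1 - e) ((1 - e) * ψ y x z * (1 - e)) ∧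
      cornerCentral (1 - e) ((1 - e) * ψ y z x * (1 - e))) := by
  obtain ⟨L1, L2, L3, D1, D2, D3⟩ := hψ
  have hfe := hff he
  have hbx : ∀ x : G, inAB e x → brk e x = 0 := by
    intro x hx
    rcases hx with h | h
    · show e*x - x*e = 0
      rw [(cPQ he he h).1, (cPQ he he h).2, sub_self]
    · show e*x - x*e = 0
      rw [annL (ef he) h, annR (fe he) h, sub_self]
  have hcb : ∀ z x : G, central z → brk z x = 0 := by
    intro z x hz
    show z*x - x*z = 0
    rw [hz x, sub_self]
  have stepB : ∀ x : G, inAB e x → central (ψ x e e) := by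
    intro x hx
    have h1 : e * ψ x e e = ψ x e e * e := by
      have h := D1 e e e x
      rw [hbx x hx, show ψ (0:G) e e = 0 from (L1 e e).map_zero,
        hcb _ x hc, zero_add] at h
      have h2 : e * ψ x e e - ψ x e e * e = 0 := h.symm
      exact sub_eq_zero.mp h2
    refine central_of he hf h1 ?_ ?_
    · intro m hm
      have h := D2 x e e m
      rw [brk_em he hm] at h
      exact keyM he hm h
    · intro n hn
      have h := D2 x e e n
      rw [brk_en he hn, show ψ x (-n) e = -(ψ x n e) from (L2 x e).map_neg n] at h
      exact keyN he hn h
  have stepC : ∀ x y : G, inAB e x → inAB e y → central (ψ x y e) := by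
    intro x y hx hy
    have h1 : e * ψ x y e = ψ x y e * e := by
      have h := D2 x e e y
      rw [hbx y hy, show ψ x (0:G) e = 0 from (L2 x e).map_zero,
        hcb _ y (stepB x hx), zero_add] at h
      have h2 : e * ψ x y e - ψ x y e * e = 0 := h.symm
      exact sub_eq_zero.mp h2
    refine central_of he hf h1 ?_ ?_
    · intro m hm
      have h := D3 x y e m
      rw [brk_em he hm] at h
      exact keyM he hm h
    · intro n hn
      have h := D3 x y e n
      rw [brk_en he hn, show ψ x y (-n) = -(ψ x y n) from (L3 x y).map_neg n] at h
      exact keyN he hn h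
  refine ⟨?_, stepB, stepC, ?_, ?_⟩
  · intro x y z hx hy hz
    have h := D3 x y e z
    rw [hbx z hz, show ψ x y (0:G) = 0 from (L3 x y).map_zero,
      hcb _ z (stepC x y hx hy), zero_add] at h
    have h2 : e * ψ x y z - ψ x y z * e = 0 := h.symm
    have h3 := sub_eq_zero.mp h2
    exact ⟨etf_zero he h3, fte_zero he h3⟩
  · intro x y z hx hy hz
    have hpx : e*x = 0 := annL (ef he) hx
    have hxp : x*e = 0 := annR (fe he) hx
    refine ⟨⟨corner_pgq he he _, ?_⟩, ⟨corner_pgq he he _, ?_⟩,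
      ⟨corner_pgq he he _, ?_⟩⟩
    · intro a ha
      have hb : brk a x = 0 := brk_disj (ef he) (fe he) ha hx
      have h := D1 y z a x
      rw [hb, show ψ (0:G) y z = 0 from (L1 y z).map_zero] at h
      exact sliceP he ha hpx hxp h.symm
    · intro a ha
      have hb : brk a x = 0 := brk_disj (ef he) (fe he) ha hx
      have h := D2 y z a x
      rw [hb, show ψ y (0:G) z = 0 from (L2 y z).map_zero] at h
      exact sliceP he ha hpx hxp h.symm
    · intro a ha
      have hb : brk a x = 0 := brk_disj (ef he) (fe he) ha hx
      have h := D3 y z a x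
      rw [hb, show ψ y z (0:G) = 0 from (L3 y z).map_zero] at h
      exact sliceP he ha hpx hxp h.symm
  · intro x y z hx hy hz
    have hpx : (1-e)*x = 0 := annL (fe he) hx
    have hxp : x*(1-e) = 0 := annR (ef he) hx
    refine ⟨⟨corner_pgq hfe hfe _, ?_⟩, ⟨corner_pgq hfe hfe _, ?_⟩,
      ⟨corner_pgq hfe hfe _, ?_⟩⟩
    · intro b hb'
      have hb : brk b x = 0 := brk_disj (fe he) (ef he) hb' hx
      have h := D1 y z b x
      rw [hb, show ψ (0:G) y z = 0 from (L1 y z).map_zero] at h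
      exact sliceP hfe hb' hpx hxp h.symm
    · intro b hb'
      have hb : brk b x = 0 := brk_disj (fe he) (ef he) hb' hx
      have h := D2 y z b x
      rw [hb, show ψ y (0:G) z = 0 from (L2 y z).map_zero] at h
      exact sliceP hfe hb' hpx hxp h.symm
    · intro b hb'
      have hb : brk b x = 0 := brk_disj (fe he) (ef he) hb' hx
      have h := D3 y z b x
      rw [hb, show ψ y z (0:G) = 0 from (L3 y z).map_zero] at h
      exact sliceP hfe hb' hpx hxp h.symm
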